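/- arXiv:0809.3063 — 4 statements merged into one kernel-verified Lean document; each statement's English description precedes it below -/
import Mathlib

section
/- Let R be one of the fields ℚ, ℝ, or ℂ, let H(t) = 1 + r_1 t + r_2 t² + ⋯ ∈ R[[t]], and let w_0, …, w_n be pairwise distinct integers. Then the formal Laurent series S_H(w_0,…,w_n;t) = Σ_{i=0}^{n} Π_{j≠i} F_H((w_j − w_i)t) has vanishing coefficients in all negative degrees (i.e. it lies in R[[t]]), and its constant term equals h_n = [H(t)^{n+1}]_n, the coefficient of t^n in H(t)^{n+1}. -/
noncomputable section

namespace RigidGenus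

variable {R : Type*} [Field R]

/-- Termwise substitution `t ↦ w·t` on Laurent series: the coefficient of `t^k`
is multiplied by `w^k`. -/
def zscale (w : R) (f : LaurentSeries R) : LaurentSeries R where
  coeff k := w ^ k * f.coeff k
  isPWO_support' := f.isPWO_support'.mono (fun k hk => by
    simp only [Function.mem_support, ne_eq] at hk ⊢
    exact fun h => hk (by rw [h, mul_zero]))

/-- Termwise derivative of a Laurent series: `(∑ f_k t^k)' = ∑ k f_k t^(k-1)`. -/
def lderiv (f : LaurentSeries R) : LaurentSeries R where
  coeff k := ((k + 1 : ℤ) : R) * f.coeff (k + 1)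
  isPWO_support' := by
    have himg : ((fun k : ℤ => k - 1) '' (Function.support f.coeff)).IsPWO :=
      f.isPWO_support'.image_of_monotone (fun a b h => sub_le_sub_right h 1)
    refine himg.mono (fun k hk => ?_)
    simp only [Function.mem_support, ne_eq] at hk
    exact ⟨k + 1, fun h => hk (by rw [h, mul_zero]), by ring⟩

/-- `F_H = H(t)/t`, as a formal Laurent series. -/
def FH (H : PowerSeries R) : LaurentSeries R :=
  HahnSeries.single (-1 : ℤ) (1 : R) * HahnSeries.ofPowerSeries ℤ R H

/-- `S_H(w_0,…,w_n;t) = ∑_i ∏_{j ≠ i} F_H((w_j - w_i) t)`. -/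
def SH (H : PowerSeries R) {n : ℕ} (w : Fin (n + 1) → ℤ) : LaurentSeries R :=
  ∑ i : Fin (n + 1), ∏ j ∈ Finset.univ.erase i, zscale ((w j - w i : ℤ) : R) (FH H)

/-- `H` is `n`-algebraically rigid: for all `1 ≤ m ≤ n` and pairwise distinct
integers `w_0, …, w_m`, the Laurent series `S_H(w_0,…,w_m;t)` is constant. -/
def AlgRigid (H : PowerSeries R) (n : ℕ) : Prop :=
  ∀ m : ℕ, 1 ≤ m → m ≤ n → ∀ w : Fin (m + 1) → ℤ, Function.Injective w →
    ∀ k : ℤ, k ≠ 0 → (SH H w).coeff k = 0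

/-- The formal exponential series `exp (a t)`. -/
def expS (a : R) : PowerSeries R := PowerSeries.mk fun n => a ^ n / n.factorial

/-- The formal sine series `sin (a t)`. -/
def sinS (a : R) : PowerSeries R :=
  PowerSeries.mk fun n => if n % 2 = 1 then (-1 : R) ^ (n / 2) * a ^ n / n.factorial else 0

/-- The formal cosine series `cos (a t)`. -/
def cosS (a : R) : PowerSeries R :=
  PowerSeries.mk fun n => if n % 2 = 0 then (-1 : R) ^ (n / 2) * a ^ n / n.factorial else 0

/-- `H = D_{a,b}`, the generalized Todd series `t(a·coth(at)+b)`: for `a ≠ 0` it is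
characterized by `D_{a,b}(t)·(e^{at} - e^{-at}) = t·(a(e^{at}+e^{-at}) + b(e^{at}-e^{-at}))`,
and `D_{0,b}(t) = 1 + bt`. -/
def IsDab (a b : R) (H : PowerSeries R) : Prop :=
  (a ≠ 0 ∧ H * (expS a - expS (-a)) =
      PowerSeries.X * (PowerSeries.C a * (expS a + expS (-a)) +
        PowerSeries.C b * (expS a - expS (-a)))) ∨
  (a = 0 ∧ H = 1 + PowerSeries.C b * PowerSeries.X)

/-- `H = G_{a,b}`, the series `t(a·cot(at)+b)`: for `a ≠ 0` it is characterized by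
`G_{a,b}(t)·sin(at) = t·(a·cos(at) + b·sin(at))`, and `G_{0,b}(t) = 1 + bt`. -/
def IsGab (a b : R) (H : PowerSeries R) : Prop :=
  (a ≠ 0 ∧ H * sinS a =
      PowerSeries.X * (PowerSeries.C a * cosS a + PowerSeries.C b * sinS a)) ∨
  (a = 0 ∧ H = 1 + PowerSeries.C b * PowerSeries.X)

/-! Since `F_H(ut) = H(ut)/(ut)`, and the factor `j = i` may be added because `H(0) = 1`,
`t^n S_H = ∑_i Q(w_i) / ∏_{j ≠ i} (w_j - w_i)` with `Q(y) = ∏_j H((w_j - y)t)`.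
The coefficient of `t^d` in `Q(y)` is a polynomial in `y` of degree at most `d` whose
coefficient of `y^d` is `(-1)^d [t^d] H^{n+1}`. The sum over `i` is the divided difference at the
`n + 1` nodes `w_i`: it kills polynomials of degree `< n` and extracts `(-1)^n` times the
coefficient of `y^n`. -/

open Finset Polynomial

theorem coeff_prod_rescale_eq_sum_eval {ι : Type*} [Fintype ι] [DecidableEq ι]
    (H : PowerSeries R) (x : ι → R) (d : ℕ) (y : R) :
    PowerSeries.coeff d (∏ j, PowerSeries.rescale (x j - y) H) =
      ∑ l ∈ finsuppAntidiag univ d,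
        (∏ j, PowerSeries.coeff (l j) H) * (∏ j, (X + C (x j)) ^ l j).eval (-y) := by
  rw [PowerSeries.coeff_prod]
  refine sum_congr rfl fun l _ => ?_
  simp only [PowerSeries.coeff_rescale, eval_prod, eval_pow, eval_add, eval_X, eval_C,
    neg_add_eq_sub, ← prod_mul_distrib, mul_comm]

theorem monic_prod_X_add_C_pow {ι : Type*} [Fintype ι] (x : ι → R) (l : ι → ℕ) :
    (∏ j, (X + C (x j)) ^ l j).Monic :=
  monic_prod_of_monic _ _ fun _ _ => (monic_X_add_C _).pow _

theorem natDegree_prod_X_add_C_pow {ι : Type*} [Fintype ι] (x : ι → R) (l : ι → ℕ) :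
    (∏ j, (X + C (x j)) ^ l j).natDegree = ∑ j, l j := by
  rw [natDegree_prod_of_monic _ _ fun _ _ => (monic_X_add_C _).pow _]
  simp

theorem coeff_sum_prod_rescale_sub {ι : Type*} [Fintype ι] [DecidableEq ι]
    (H : PowerSeries R) {x : ι → R} (hx : Function.Injective x) {d : ℕ}
    (hd : d < Fintype.card ι) :
    PowerSeries.coeff d (∑ i, (∏ j ∈ univ.erase i, (x j - x i))⁻¹ •
        ∏ j, PowerSeries.rescale (x j - x i) H) =
      if d + 1 = Fintype.card ι then PowerSeries.coeff d (H ^ Fintype.card ι) else 0 := by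
  have hdivdiff : ∀ l ∈ finsuppAntidiag (univ : Finset ι) d,
      ∑ i, (∏ j ∈ univ.erase i, (x j - x i))⁻¹ * (∏ j, (X + C (x j)) ^ l j).eval (-x i) =
        if d + 1 = Fintype.card ι then 1 else 0 := by
    intro l hl
    have hdeg : (∏ j, (X + C (x j)) ^ l j).natDegree = d := by
      rw [natDegree_prod_X_add_C_pow, (mem_finsuppAntidiag.mp hl).1]
    have hdeg_lt : (∏ j, (X + C (x j)) ^ l j).degree <
        ((#(univ : Finset ι) : ℕ) : WithBot ℕ) := by
      rw [degree_eq_natDegree (monic_prod_X_add_C_pow x l).ne_zero, hdeg, card_univ]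
      exact_mod_cast hd
    -- Lagrange at the nodes `-x i`, for which `-x i - -x j = x j - x i`.
    have hcoeff := Lagrange.coeff_eq_sum (v := fun i => -x i) (neg_injective.comp hx).injOn hdeg_lt
    simp only [neg_sub_neg, card_univ] at hcoeff
    simp only [← div_eq_inv_mul, ← hcoeff]
    split_ifs with h
    · rw [show Fintype.card ι - 1 = d by omega, ← hdeg]
      exact (monic_prod_X_add_C_pow x l).coeff_natDegree
    · exact coeff_eq_zero_of_natDegree_lt (by omega)
  simp only [map_sum, PowerSeries.coeff_smul, smul_eq_mul, coeff_prod_rescale_eq_sum_eval,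
    mul_sum]
  rw [sum_comm]
  simp only [mul_left_comm _ (∏ j, PowerSeries.coeff _ H), ← mul_sum]
  rw [sum_congr rfl fun l hl => congrArg _ (hdivdiff l hl)]
  split_ifs
  · rw [← card_univ, ← prod_const, PowerSeries.coeff_prod]
    simp
  · simp

theorem coeff_single_neg_mul_ofPowerSeries (m : ℕ) (P : PowerSeries R) (k : ℤ) :
    (HahnSeries.single (-(m : ℤ)) 1 * HahnSeries.ofPowerSeries ℤ R P).coeff k =
      if k + m < 0 then 0 else PowerSeries.coeff (k + m).natAbs P := by
  rw [show k = k + m + -m by ring, HahnSeries.coeff_single_mul_add, one_mul,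
    add_neg_cancel_right]
  exact PowerSeries.coeff_coe _ _

theorem coeff_FH (P : PowerSeries R) (k : ℤ) :
    (FH P).coeff k = if k + 1 < 0 then 0 else PowerSeries.coeff (k + 1).natAbs P := by
  simpa [FH] using coeff_single_neg_mul_ofPowerSeries 1 P k

theorem zscale_FH {u : R} (hu : u ≠ 0) (P : PowerSeries R) :
    zscale u (FH P) = FH (PowerSeries.C u⁻¹ * PowerSeries.rescale u P) := by
  ext k
  change u ^ k * (FH P).coeff k = _
  rw [coeff_FH, coeff_FH]
  split_ifs with hk
  · simp
  · obtain ⟨m, hm⟩ := Int.eq_ofNat_of_zero_le (not_lt.mp hk)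
    rw [hm, Int.natAbs_natCast, PowerSeries.coeff_C_mul, PowerSeries.coeff_rescale,
      show k = m - 1 by omega, zpow_sub_one₀ hu, zpow_natCast]
    ring

theorem prod_FH {ι : Type*} (s : Finset ι) (P : ι → PowerSeries R) :
    ∏ j ∈ s, FH (P j) =
      HahnSeries.single (-(#s : ℤ)) 1 * HahnSeries.ofPowerSeries ℤ R (∏ j ∈ s, P j) := by
  induction s using Finset.cons_induction with
  | empty => simp
  | cons a s ha ih =>
    rw [prod_cons, ih, prod_cons, map_mul, FH, card_cons, mul_mul_mul_comm,
      HahnSeries.single_mul_single, one_mul, Nat.cast_succ, neg_add, add_comm]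

theorem SH_eq_single_mul_ofPowerSeries [CharZero R] (H : PowerSeries R)
    (hH : PowerSeries.constantCoeff H = 1) {n : ℕ} (w : Fin (n + 1) → ℤ)
    (hw : Function.Injective w) :
    SH H w = HahnSeries.single (-(n : ℤ)) 1 * HahnSeries.ofPowerSeries ℤ R
      (∑ i, (∏ j ∈ univ.erase i, ((w j : R) - w i))⁻¹ •
        ∏ j, PowerSeries.rescale ((w j : R) - w i) H) := by
  rw [SH, map_sum, mul_sum]
  refine sum_congr rfl fun i _ => ?_
  have hfactor : ∀ j ∈ univ.erase i, zscale ((w j - w i : ℤ) : R) (FH H) =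
      FH (PowerSeries.C ((w j : R) - w i)⁻¹ * PowerSeries.rescale ((w j : R) - w i) H) := by
    intro j hj
    rw [Int.cast_sub]
    exact zscale_FH (sub_ne_zero.mpr (Int.cast_injective.ne (hw.ne (mem_erase.mp hj).1))) H
  rw [prod_congr rfl hfactor, prod_FH, card_erase_of_mem (mem_univ i), card_univ,
    Fintype.card_fin, prod_mul_distrib, ← map_prod, ← mul_prod_erase univ _ (mem_univ i),
    sub_self, PowerSeries.rescale_zero, RingHom.comp_apply, hH,
    PowerSeries.smul_eq_C_mul, prod_inv_distrib, Nat.add_sub_cancel]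
  simp

/-- Proposition 2.1: for `H = 1 + r₁t + ⋯` and pairwise distinct integers
`w₀, …, w_n`, the Laurent series `S_H(w₀,…,w_n;t)` has vanishing coefficients in all
negative degrees, and its constant term is `h_n = [H^{n+1}]_n`. -/
theorem SH_mem_powerSeries_and_constant_term {R : Type*} [Field R] [CharZero R]
    (H : PowerSeries R) (hH : PowerSeries.constantCoeff H = 1)
    {n : ℕ} (w : Fin (n + 1) → ℤ) (hw : Function.Injective w) :
    (∀ k : ℤ, k < 0 → (SH H w).coeff k = 0) ∧
      (SH H w).coeff 0 = PowerSeries.coeff n (H ^ (n + 1)) := by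
  have hx : Function.Injective fun i => (w i : R) := Int.cast_injective.comp hw
  simp only [SH_eq_single_mul_ofPowerSeries H hH w hw, coeff_single_neg_mul_ofPowerSeries]
  refine ⟨fun k hk => ?_, ?_⟩
  · split_ifs with hkn
    · rfl
    · rw [coeff_sum_prod_rescale_sub H hx (by simp; omega), if_neg (by simp; omega)]
  · rw [if_neg (by simp), coeff_sum_prod_rescale_sub H hx (by simp), if_pos (by simp)]
    simp

end RigidGenus
end
end

section
/- Let R be one of the fields ℚ, ℝ, or ℂ and let H(t) = 1 + r_1 t + r_2 t² + ⋯ ∈ R[[t]] be 1-algebraically rigid, i.e. for all distinct integers w_0, w_1 the series S_H(w_0,w_1;t) is constant. Then F_H(−t) = h_1 − F_H(t) as formal Laurent series, where h_1 = [H²]_1 = 2r_1 and F_H(−t) denotes the Laurent series whose coefficient of t^k is (−1)^k times that of F_H. -/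
noncomputable section

namespace RigidGenus

variable {R : Type*} [Field R]

/-! For the weights `(0, 1)` one has `S_H(0, 1; t) = F_H(t) + F_H(-t)`, so 1-rigidity says exactly
that `F_H(t) + F_H(-t)` is constant; its constant term is `2 [t⁰] F_H = 2 r₁ = h₁`. -/

@[simp]
lemma coeff_zscale (w : R) (f : LaurentSeries R) (k : ℤ) :
    (zscale w f).coeff k = w ^ k * f.coeff k := rfl

lemma coeff_FH_natCast (H : PowerSeries R) (n : ℕ) :
    (FH H).coeff n = PowerSeries.coeff (n + 1) H := by
  have h := HahnSeries.coeff_single_mul_add (r := (1 : R))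
    (x := HahnSeries.ofPowerSeries ℤ R H) (a := ((n + 1 : ℕ) : ℤ)) (b := (-1 : ℤ))
  rw [one_mul, HahnSeries.ofPowerSeries_apply_coeff, Nat.cast_succ, add_neg_cancel_right] at h
  exact h

lemma SH_pair (H : PowerSeries R) (a b : ℤ) :
    SH H ![a, b] = zscale ((b - a : ℤ) : R) (FH H) + zscale ((a - b : ℤ) : R) (FH H) := by
  have h₀ : Finset.univ.erase (0 : Fin 2) = {1} := by decide
  have h₁ : Finset.univ.erase (1 : Fin 2) = {0} := by decide
  simp [SH, Fin.sum_univ_two, h₀, h₁]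

lemma zscale_neg_one_eq_C_sub (f : LaurentSeries R)
    (h : ∀ k : ℤ, k ≠ 0 → (f + zscale (-1) f).coeff k = 0) :
    zscale (-1) f = HahnSeries.C (2 * f.coeff 0) - f := by
  ext k
  rcases eq_or_ne k 0 with rfl | hk
  · simp only [coeff_zscale, zpow_zero, one_mul, HahnSeries.C_apply, HahnSeries.coeff_sub',
      Pi.sub_apply, HahnSeries.coeff_single_same]
    ring
  · have hk' := h k hk
    simp only [HahnSeries.coeff_add', Pi.add_apply, coeff_zscale, HahnSeries.C_apply,
      HahnSeries.coeff_sub', Pi.sub_apply, HahnSeries.coeff_single_of_ne hk, zero_sub] at hk' ⊢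
    linear_combination hk'

lemma coeff_FH_add_zscale_neg_one_of_algRigid {H : PowerSeries R} (hrig : AlgRigid H 1)
    {k : ℤ} (hk : k ≠ 0) : (FH H + zscale (-1) (FH H)).coeff k = 0 := by
  simpa [SH_pair] using hrig 1 le_rfl le_rfl ![0, 1] (by decide) k hk

theorem FH_neg_of_algRigid_one_general {R : Type*} [Field R]
    (H : PowerSeries R) (hH : PowerSeries.constantCoeff H = 1)
    (hrig : AlgRigid H 1) :
    zscale (-1 : R) (FH H)
        = (HahnSeries.C (PowerSeries.coeff 1 (H ^ 2)) : LaurentSeries R) - FH H ∧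
      PowerSeries.coeff 1 (H ^ 2) = 2 * PowerSeries.coeff 1 H := by
  have h₁ : PowerSeries.coeff 1 (H ^ 2) = 2 * PowerSeries.coeff 1 H := by
    simp [PowerSeries.coeff_one_pow, hH]
  have h₀ : PowerSeries.coeff 1 H = (FH H).coeff 0 := by
    simpa using (coeff_FH_natCast H 0).symm
  refine ⟨?_, h₁⟩
  rw [h₁, h₀]
  exact zscale_neg_one_eq_C_sub _ fun k hk => coeff_FH_add_zscale_neg_one_of_algRigid hrig hk

/-- if `H = 1 + r₁t + ⋯` is 1-algebraically rigid, then
`F_H(−t) = h₁ − F_H(t)`, where `h₁ = [H²]₁ = 2r₁`. -/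
theorem FH_neg_of_algRigid_one {R : Type*} [Field R] [CharZero R]
    (H : PowerSeries R) (hH : PowerSeries.constantCoeff H = 1)
    (hrig : AlgRigid H 1) :
    zscale (-1 : R) (FH H)
        = (HahnSeries.C (PowerSeries.coeff 1 (H ^ 2)) : LaurentSeries R) - FH H ∧
      PowerSeries.coeff 1 (H ^ 2) = 2 * PowerSeries.coeff 1 H :=
  FH_neg_of_algRigid_one_general H hH hrig

end RigidGenus
end
end

section
/- Let R be one of the fields ℚ, ℝ, or ℂ and let H(t) = 1 + r_1 t + r_2 t² + ⋯ ∈ R[[t]] be 2-algebraically rigid. Then F_H(−t)² + h_1·F_H(t) + F_H′(t) = h_2 as formal Laurent series, where h_1 = [H²]_1, h_2 = [H³]_2, F_H(−t) is the Laurent series whose coefficient of t^k is (−1)^k times that of F_H, and F_H′ is the termwise derivative Σ_k k f_k t^{k−1} of F_H = Σ_k f_k t^k. -/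
noncomputable section

namespace RigidGenus

variable {R : Type*} [Field R]

/-!
Rigidity for `m = 2` at the weights `0, 1, x` says that, once the factor `x (x - 1) / t²` is
cleared, every coefficient of `t^m` with `m ≠ 2` in
`(x - 1) H(t) H(xt) - x H(-t) H((x - 1)t) + H(-xt) H((1 - x)t)` vanishes. That coefficient is a
polynomial in `x` with a root at every integer `x ≥ 2`, so it is zero; its derivative at `x = 1`
is the coefficient of `t^m` in `H(t)² - H(-t) - 2 r₁ t H(-t) - t H'(-t)`. Substituting `-t` for `t`
and dividing by `t²` turns this into the identity for `F_H`.
-/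

section

open PowerSeries Finset

theorem coeff_X_mul_derivative (f : R⟦X⟧) (n : ℕ) :
    coeff n (X * d⁄dX R f) = n * coeff n f := by
  cases n with
  | zero => simp
  | succ n => rw [coeff_succ_X_mul, coeff_derivative, mul_comm, Nat.cast_succ]

theorem rescale_C (a c : R) : rescale a (C c) = C c := by
  ext n
  rw [coeff_rescale, coeff_C]
  split_ifs with hn <;> simp [hn]

def divXPow (d : ℕ) (G : R⟦X⟧) : LaurentSeries R :=
  HahnSeries.single (-(d : ℤ)) 1 * HahnSeries.ofPowerSeries ℤ R G

theorem coeff_divXPow (d : ℕ) (G : R⟦X⟧) (k : ℤ) :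
    (divXPow d G).coeff k = if k + d < 0 then 0 else coeff (k + d).natAbs G := by
  conv_lhs => rw [← add_neg_cancel_right k (d : ℤ)]
  rw [divXPow, HahnSeries.coeff_single_mul_add, one_mul]
  exact PowerSeries.coeff_coe G _

theorem coeff_divXPow_of_lt (d : ℕ) (G : R⟦X⟧) {k : ℤ} (hk : k + d < 0) :
    (divXPow d G).coeff k = 0 := by
  rw [coeff_divXPow, if_pos hk]

theorem coeff_divXPow_natCast_sub (d : ℕ) (G : R⟦X⟧) (n : ℕ) :
    (divXPow d G).coeff (n - d) = coeff n G := by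
  rw [coeff_divXPow, sub_add_cancel, if_neg (by omega), Int.natAbs_natCast]

theorem divXPow_zero (G : R⟦X⟧) : divXPow 0 G = HahnSeries.ofPowerSeries ℤ R G := by
  simp [divXPow]

theorem divXPow_mul_divXPow (d e : ℕ) (G G' : R⟦X⟧) :
    divXPow d G * divXPow e G' = divXPow (d + e) (G * G') := by
  rw [divXPow, divXPow, divXPow, map_mul, mul_mul_mul_comm, HahnSeries.single_mul_single,
    one_mul, Nat.cast_add, neg_add]

theorem divXPow_add (d : ℕ) (G G' : R⟦X⟧) :
    divXPow d G + divXPow d G' = divXPow d (G + G') := by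
  rw [divXPow, divXPow, divXPow, map_add, mul_add]

theorem divXPow_X_pow_mul (d e : ℕ) (G : R⟦X⟧) :
    divXPow (d + e) (X ^ e * G) = divXPow d G := by
  rw [divXPow, divXPow, map_mul, map_pow, HahnSeries.ofPowerSeries_X, HahnSeries.single_pow,
    ← mul_assoc, HahnSeries.single_mul_single, one_pow, one_mul, nsmul_one, Nat.cast_add,
    neg_add, neg_add_cancel_right]

theorem C_mul_divXPow (c : R) (d : ℕ) (G : R⟦X⟧) :
    HahnSeries.C c * divXPow d G = divXPow d (C c * G) := by
  rw [divXPow, divXPow, ← HahnSeries.ofPowerSeries_C (Γ := ℤ), map_mul, mul_left_comm]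

theorem FH_eq_divXPow (H : R⟦X⟧) : FH H = divXPow 1 H := by
  simp [FH, divXPow]

theorem zscale_divXPow {c : R} (hc : c ≠ 0) (d : ℕ) (G : R⟦X⟧) :
    zscale c (divXPow d G) = divXPow d (C (c ^ d)⁻¹ * rescale c G) := by
  ext k
  change c ^ k * (divXPow d G).coeff k = _
  rcases lt_or_ge (k + d) 0 with hk | hk
  · rw [coeff_divXPow_of_lt d _ hk, coeff_divXPow_of_lt d _ hk, mul_zero]
  · obtain ⟨n, rfl⟩ : ∃ n : ℕ, k = n - d := ⟨(k + d).toNat, by omega⟩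
    rw [coeff_divXPow_natCast_sub, coeff_divXPow_natCast_sub, coeff_C_mul, coeff_rescale,
      zpow_sub₀ hc, zpow_natCast, zpow_natCast]
    field_simp

theorem lderiv_divXPow (d : ℕ) (G : R⟦X⟧) :
    lderiv (divXPow d G) = divXPow (d + 1) (X * d⁄dX R G - C (d : R) * G) := by
  ext k
  change ((k + 1 : ℤ) : R) * (divXPow d G).coeff (k + 1) = _
  rcases lt_or_ge (k + (d + 1 : ℕ)) 0 with hk | hk
  · rw [coeff_divXPow_of_lt d _ (by omega), coeff_divXPow_of_lt _ _ hk, mul_zero]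
  · obtain ⟨n, rfl⟩ : ∃ n : ℕ, k = n - (d + 1 : ℕ) := ⟨(k + (d + 1 : ℕ)).toNat, by omega⟩
    rw [show (n : ℤ) - (d + 1 : ℕ) + 1 = n - d by push_cast; ring, coeff_divXPow_natCast_sub,
      coeff_divXPow_natCast_sub, map_sub, coeff_C_mul, coeff_X_mul_derivative]
    push_cast
    ring

-- `x (x - 1) t² S_H(0, 1, x; t)`, see `C_mul_SH_zero_one`.
def threePointSeries (H : R⟦X⟧) (x : R) : R⟦X⟧ :=
  C (x - 1) * (H * rescale x H) - C x * (rescale (-1) H * rescale (x - 1) H)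
    + rescale (-x) H * rescale (1 - x) H

theorem C_mul_SH_zero_one (H : R⟦X⟧) (u : ℤ) (hu0 : (u : R) ≠ 0) (hu1 : (u : R) ≠ 1) :
    HahnSeries.C ((u : R) * (u - 1)) * SH H ![0, 1, u] = divXPow 2 (threePointSeries H u) := by
  have hu_sub : (u : R) - 1 ≠ 0 := sub_ne_zero.mpr hu1
  have hsub_u : 1 - (u : R) ≠ 0 := sub_ne_zero.mpr hu1.symm
  have erase0 : (univ.erase (0 : Fin 3)) = {1, 2} := by decide
  have erase1 : (univ.erase (1 : Fin 3)) = {0, 2} := by decide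
  have erase2 : (univ.erase (2 : Fin 3)) = {0, 1} := by decide
  rw [SH, Fin.sum_univ_three, erase0, erase1, erase2, prod_pair (by decide),
    prod_pair (by decide), prod_pair (by decide)]
  simp only [Matrix.cons_val_zero, Matrix.cons_val_one, Matrix.cons_val_two, Matrix.vecHead,
    Matrix.vecTail, Function.comp_apply, Fin.succ_zero_eq_one, Int.cast_one,
    sub_zero, zero_sub, Int.cast_neg, Int.cast_sub, FH_eq_divXPow]
  rw [zscale_divXPow one_ne_zero, zscale_divXPow hu0, zscale_divXPow (neg_ne_zero.mpr one_ne_zero),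
    zscale_divXPow hu_sub, zscale_divXPow (neg_ne_zero.mpr hu0),
    zscale_divXPow hsub_u]
  simp only [divXPow_mul_divXPow, divXPow_add, C_mul_divXPow]
  congr 1
  simp only [pow_one, rescale_one, RingHom.id_apply, threePointSeries]
  have e1 : C ((u : R) * (u - 1)) * C 1⁻¹ * C (u : R)⁻¹ = C ((u : R) - 1) := by
    rw [← map_mul, ← map_mul]; congr 1; field_simp
  have e2 : C ((u : R) * (u - 1)) * C (-1)⁻¹ * C ((u : R) - 1)⁻¹ = - C (u : R) := by
    rw [← map_mul, ← map_mul, ← map_neg]; congr 1; field_simp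
  have e3 : C ((u : R) * (u - 1)) * C (-(u : R))⁻¹ * C (1 - (u : R))⁻¹ = 1 := by
    rw [← map_mul, ← map_mul, ← map_one C]; congr 1
    field_simp [hsub_u]
    ring
  linear_combination (H * rescale (u : R) H) * e1
    + (rescale (-1) H * rescale ((u : R) - 1) H) * e2
    + (rescale (-(u : R)) H * rescale (1 - (u : R)) H) * e3

def rigidityPoly (a b : ℕ) : Polynomial R :=
  (Polynomial.X - 1) * Polynomial.X ^ b
    - Polynomial.C ((-1) ^ a) * (Polynomial.X * (Polynomial.X - 1) ^ b)
    + Polynomial.C ((-1) ^ (a + b)) * (Polynomial.X ^ a * (Polynomial.X - 1) ^ b)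

def threePointPoly (H : R⟦X⟧) (m : ℕ) : Polynomial R :=
  ∑ p ∈ antidiagonal m,
    Polynomial.C (coeff p.1 H * coeff p.2 H) * rigidityPoly p.1 p.2

theorem coeff_threePointSeries (H : R⟦X⟧) (x : R) (m : ℕ) :
    coeff m (threePointSeries H x) = (threePointPoly H m).eval x := by
  rw [threePointSeries, threePointPoly, map_add, map_sub, coeff_C_mul, coeff_C_mul]
  simp only [coeff_mul, Polynomial.eval_finsetSum, mul_sum, ← sum_sub_distrib,
    ← sum_add_distrib]
  refine sum_congr rfl fun p _ => ?_
  simp only [coeff_rescale, rigidityPoly, Polynomial.eval_mul, Polynomial.eval_add,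
    Polynomial.eval_sub, Polynomial.eval_pow, Polynomial.eval_X, Polynomial.eval_one,
    Polynomial.eval_C]
  rw [neg_pow x, show 1 - x = -(x - 1) by ring, neg_pow (x - 1), pow_add]
  ring

theorem threePointPoly_eq_zero_of_algRigid_two [CharZero R] {H : R⟦X⟧} (hrig : AlgRigid H 2)
    {m : ℕ} (hm : m ≠ 2) : threePointPoly H m = 0 := by
  refine Polynomial.eq_zero_of_infinite_isRoot _ <|
    Set.infinite_of_injective_forall_mem (f := fun n : ℕ => ((n + 2 : ℕ) : R))
      (fun a b h => by simpa using h) fun n => ?_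
  set u : ℤ := ((n + 2 : ℕ) : ℤ)
  have hw : Function.Injective ![0, 1, u] := by
    intro i j hij
    fin_cases i <;> fin_cases j <;> simp_all [u] <;> omega
  have hu0 : (u : R) ≠ 0 := by simp [u]; norm_cast
  have hu1 : (u : R) ≠ 1 := by simp [u]; norm_cast; omega
  have hS := hrig 2 one_le_two le_rfl _ hw ((m : ℤ) - (2 : ℕ)) (by omega)
  have := congrArg (fun f : LaurentSeries R => f.coeff ((m : ℤ) - (2 : ℕ)))
    (C_mul_SH_zero_one H u hu0 hu1)
  simp only [HahnSeries.C_mul_eq_smul, HahnSeries.coeff_smul, hS, smul_zero] at this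
  rw [coeff_divXPow_natCast_sub, coeff_threePointSeries] at this
  simpa [u] using this.symm

theorem derivative_rigidityPoly_eval_one (a b : ℕ) :
    (Polynomial.derivative (rigidityPoly a b : Polynomial R)).eval 1
      = 1 + (if b = 0 then (-1) ^ a * ((a : R) - 1) else 0)
        + (if b = 1 then -2 * (-1) ^ a else 0) := by
  rcases b with _ | _ | b <;>
    simp [rigidityPoly, Polynomial.derivative_mul, Polynomial.derivative_pow] <;> ring

theorem derivative_threePointPoly_eval_one (H : R⟦X⟧) (m : ℕ) :
    (Polynomial.derivative (threePointPoly H m)).eval 1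
      = coeff m (H ^ 2 + C (coeff 0 H) * rescale (-1) (X * d⁄dX R H - H)
          - C (2 * coeff 1 H) * X * rescale (-1) H) := by
  have hshape : H ^ 2 + C (coeff 0 H) * rescale (-1) (X * d⁄dX R H - H)
      - C (2 * coeff 1 H) * X * rescale (-1) H
      = H * H + rescale (-1) (X * d⁄dX R H - H) * C (coeff 0 H)
        + rescale (-1) H * (C (-(2 * coeff 1 H)) * X) := by
    rw [map_neg]; ring
  rw [hshape, threePointPoly, Polynomial.derivative_sum, Polynomial.eval_finsetSum, map_add,
    map_add, coeff_mul, coeff_mul, coeff_mul, ← sum_add_distrib, ← sum_add_distrib]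
  refine sum_congr rfl fun ⟨a, b⟩ _ => ?_
  rw [Polynomial.derivative_C_mul, Polynomial.eval_mul, Polynomial.eval_C,
    derivative_rigidityPoly_eval_one, coeff_rescale, coeff_rescale, map_sub,
    coeff_X_mul_derivative, coeff_C, coeff_C_mul, coeff_X]
  rcases b with _ | _ | b <;> simp <;> ring

theorem rescale_neg_one_sq_add_eq_of_algRigid_two [CharZero R] {H : R⟦X⟧}
    (hH : constantCoeff H = 1) (hrig : AlgRigid H 2) :
    rescale (-1) H ^ 2 + C (coeff 1 (H ^ 2)) * X * H + (X * d⁄dX R H - H)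
      = C (coeff 2 (H ^ 3)) * X ^ 2 := by
  have h0 : coeff 0 H = 1 := by rw [coeff_zero_eq_constantCoeff_apply, hH]
  have h1 : coeff 1 (H ^ 2) = 2 * coeff 1 H := by
    simp [sq, coeff_mul, Nat.sum_antidiagonal_eq_sum_range_succ_mk, sum_range_succ,
      hH]
    ring
  ext m
  rcases eq_or_ne m 2 with rfl | hm
  · rw [← map_pow, mul_assoc, map_add, map_add, map_sub, coeff_rescale, coeff_C_mul, coeff_C_mul,
      coeff_succ_X_mul, coeff_X_mul_derivative, coeff_X_pow_self, h1]
    simp [pow_succ, coeff_mul, Nat.sum_antidiagonal_eq_sum_range_succ_mk,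
      sum_range_succ, hH]
    ring
  · have hE : rescale (-1) H ^ 2 + C (coeff 1 (H ^ 2)) * X * H + (X * d⁄dX R H - H)
        = rescale (-1) (H ^ 2 + C (coeff 0 H) * rescale (-1) (X * d⁄dX R H - H)
            - C (2 * coeff 1 H) * X * rescale (-1) H) := by
      simp only [map_add, map_sub, map_mul, map_neg, map_pow, rescale_rescale, rescale_neg_one_X,
        rescale_C, neg_mul_neg, one_mul, rescale_one, RingHom.id_apply, h0, h1, map_one]
      ring
    rw [hE, coeff_rescale, ← derivative_threePointPoly_eval_one,
      threePointPoly_eq_zero_of_algRigid_two hrig hm, coeff_C_mul_X_pow, if_neg hm]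
    simp

end

/-- Lemma 4.1: if `H = 1 + r₁t + ⋯` is 2-algebraically rigid, then
`F_H(−t)² + h₁·F_H(t) + F_H′(t) = h₂`, where `h₁ = [H²]₁` and `h₂ = [H³]₂`. -/
theorem FH_neg_sq_add_of_algRigid_two {R : Type*} [Field R] [CharZero R]
    (H : PowerSeries R) (hH : PowerSeries.constantCoeff H = 1)
    (hrig : AlgRigid H 2) :
    zscale (-1 : R) (FH H) ^ 2
        + (HahnSeries.C (PowerSeries.coeff 1 (H ^ 2)) : LaurentSeries R) * FH H
        + lderiv (FH H)
      = (HahnSeries.C (PowerSeries.coeff 2 (H ^ 3)) : LaurentSeries R) := by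
  open PowerSeries in
  calc zscale (-1 : R) (FH H) ^ 2 + HahnSeries.C (coeff 1 (H ^ 2)) * FH H + lderiv (FH H)
      = divXPow 2 (rescale (-1) H ^ 2 + C (coeff 1 (H ^ 2)) * X * H + (X * d⁄dX R H - H)) := by
        rw [FH_eq_divXPow, zscale_divXPow (neg_ne_zero.mpr one_ne_zero), lderiv_divXPow,
          C_mul_divXPow, ← divXPow_X_pow_mul 1 1 (C _ * H), sq, divXPow_mul_divXPow, divXPow_add,
          divXPow_add]
        congr 1
        simp only [pow_one, inv_neg, inv_one, map_neg, map_one, Nat.cast_one]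
        ring
    _ = divXPow (0 + 2) (X ^ 2 * C (coeff 2 (H ^ 3))) := by
        rw [rescale_neg_one_sq_add_eq_of_algRigid_two hH hrig, mul_comm]
    _ = HahnSeries.C (coeff 2 (H ^ 3)) := by
        rw [divXPow_X_pow_mul, divXPow_zero, HahnSeries.ofPowerSeries_C]

end RigidGenus
end
end

section
/- For a, b ∈ ℂ with a ≠ 0 and every n ≥ 0, the coefficient of t^n in D_{a,b}(t)^{n+1} equals ((b + a)^{n+1} − (b − a)^{n+1})/(2a) = Σ_{k=0}^{n} (b + a)^k (b − a)^{n−k}. -/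
noncomputable section

namespace RigidGenus

variable {R : Type*} [Field R]

/-!
Multiplying the defining relation by `e^{-at}` shows that `V := D - (b - a)t` satisfies
`V·(1 - e^{-2at}) = 2a·t`. Differentiating gives the Riccati equation `tV' = V - V² + 2a·tV`,
and comparing the coefficients of `t^{m+1}` in `t·(V^{m+1})'` yields
`[t^{m+1}] V^{m+2} = 2a·[t^m] V^{m+1}`, hence `[t^m] V^{m+1} = (2a)^m`. The binomial expansion of
`D^{n+1} = (V + (b - a)t)^{n+1}` then gives `2a·[t^n] D^{n+1} = (b + a)^{n+1} - (b - a)^{n+1}`.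
-/

open PowerSeries

theorem coeff_one_one_sub_expS_neg (c : R) : coeff 1 (1 - expS (-c)) = c := by
  simp [expS]

theorem constantCoeff_eq_one_of_mul_one_sub_expS {c : R} {V : R⟦X⟧} (hc : c ≠ 0)
    (hV : V * (1 - expS (-c)) = C c * X) : constantCoeff V = 1 := by
  have h := congrArg (coeff 1) hV
  have h0 : constantCoeff (1 - expS (-c)) = 0 := by simp [expS]
  rw [coeff_mul, Finset.Nat.sum_antidiagonal_succ, Finset.Nat.antidiagonal_zero,
    Finset.sum_singleton] at h
  simp only [zero_add, coeff_zero_eq_constantCoeff_apply, coeff_one_one_sub_expS_neg, h0,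
    mul_zero, add_zero, coeff_C_mul, coeff_one_X, mul_one] at h
  exact mul_right_cancel₀ hc (h.trans (one_mul c).symm)

theorem coeff_add_C_mul_X_pow_succ {A : Type*} [CommRing A] {c d : A} {V : A⟦X⟧}
    (hV : ∀ m, coeff m (V ^ (m + 1)) = c ^ m) (n : ℕ) :
    c * coeff n ((V + C d * X) ^ (n + 1)) = (c + d) ^ (n + 1) - d ^ (n + 1) := by
  have hterm : ∀ k ∈ Finset.range (n + 1),
      coeff n (V ^ (k + 1) * (C d * X) ^ (n + 1 - (k + 1)) * ((n + 1).choose (k + 1) : A⟦X⟧)) =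
        c ^ k * d ^ (n + 1 - (k + 1)) * (n + 1).choose (k + 1) := by
    intro k hk
    have hkn : k ≤ n := Finset.mem_range_succ_iff.mp hk
    rw [show V ^ (k + 1) * (C d * X) ^ (n + 1 - (k + 1)) * ((n + 1).choose (k + 1) : A⟦X⟧) =
        C (d ^ (n + 1 - (k + 1)) * (n + 1).choose (k + 1)) * (X ^ (n - k) * V ^ (k + 1)) by
      simp only [map_mul, map_pow, map_natCast, Nat.add_sub_add_right]; ring,
      coeff_C_mul, coeff_X_pow_mul', if_pos (Nat.sub_le n k), Nat.sub_sub_self hkn, hV]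
    ring
  have hzero : coeff n ((C d * X) ^ (n + 1)) = 0 := by
    rw [mul_pow, ← map_pow, coeff_C_mul_X_pow, if_neg (by omega)]
  have hbinom : (c + d) ^ (n + 1) = ∑ k ∈ Finset.range (n + 1),
      c ^ (k + 1) * d ^ (n + 1 - (k + 1)) * (n + 1).choose (k + 1) + d ^ (n + 1) := by
    rw [add_pow, Finset.sum_range_succ']
    simp
  rw [add_pow, map_sum, Finset.sum_range_succ', Finset.sum_congr rfl hterm, hbinom,
    add_sub_cancel_right, pow_zero, one_mul, Nat.sub_zero, Nat.choose_zero_right, Nat.cast_one,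
    mul_one, hzero, add_zero, Finset.mul_sum]
  refine Finset.sum_congr rfl fun k _ => ?_
  ring

section CharZero

variable [CharZero R]

theorem expS_eq_rescale_exp (x : R) : expS x = rescale x (exp R) := by
  ext n
  simp [expS, coeff_rescale, div_eq_mul_inv]

theorem expS_mul_expS (x y : R) : expS x * expS y = expS (x + y) := by
  simp only [expS_eq_rescale_exp, exp_mul_exp_eq_exp_add]

theorem expS_zero : expS (0 : R) = 1 := by
  rw [expS_eq_rescale_exp, rescale_zero_apply, constantCoeff_exp, map_one]

theorem derivative_expS (x : R) : d⁄dX R (expS x) = C x * expS x := by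
  ext n
  simp only [expS, coeff_derivative, coeff_C_mul, coeff_mk, Nat.factorial_succ, Nat.cast_mul,
    pow_succ]
  field_simp
  push_cast
  ring

theorem X_mul_derivative_eq_of_mul_one_sub_expS {c : R} {V : R⟦X⟧} (hc : c ≠ 0)
    (hV : V * (1 - expS (-c)) = C c * X) :
    X * d⁄dX R V = V - V ^ 2 + C c * (X * V) := by
  have hne : 1 - expS (-c) ≠ 0 := fun h => hc <| by
    rw [← coeff_one_one_sub_expS_neg c, h, map_zero]
  have hd := congrArg (d⁄dX R) hV
  simp only [Derivation.leibniz, map_sub, Derivation.map_one_eq_zero, derivative_expS,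
    derivative_C, derivative_X, smul_eq_mul, map_neg] at hd
  apply mul_right_cancel₀ hne
  linear_combination X * hd + (V - 1) * hV

theorem coeff_succ_pow_succ_of_X_mul_derivative {c : R} {V : R⟦X⟧}
    (hV : X * d⁄dX R V = V - V ^ 2 + C c * (X * V)) (m : ℕ) :
    coeff (m + 1) (V ^ (m + 2)) = c * coeff m (V ^ (m + 1)) := by
  have hpow : X * d⁄dX R (V ^ (m + 1)) =
      C ((m : R) + 1) * (V ^ (m + 1) - V ^ (m + 2) + C c * (X * V ^ (m + 1))) := by
    rw [derivative_pow, Nat.add_sub_cancel, map_add, map_natCast, map_one]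
    push_cast
    linear_combination ((m + 1 : R⟦X⟧) * V ^ m) * hV
  have h := congrArg (coeff (m + 1)) hpow
  rw [coeff_succ_X_mul, coeff_derivative, coeff_C_mul] at h
  simp only [map_add, map_sub, coeff_C_mul, coeff_succ_X_mul] at h
  have hm : (m + 1 : R) ≠ 0 := Nat.cast_add_one_ne_zero m
  refine mul_left_cancel₀ hm ?_
  linear_combination h

theorem coeff_pow_succ_of_X_mul_derivative {c : R} {V : R⟦X⟧}
    (hV : X * d⁄dX R V = V - V ^ 2 + C c * (X * V)) (m : ℕ) :
    coeff m (V ^ (m + 1)) = c ^ m * constantCoeff V := by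
  induction m with
  | zero => simp
  | succ m ih => rw [coeff_succ_pow_succ_of_X_mul_derivative hV, ih, pow_succ']; ring

theorem IsDab.sub_mul_one_sub_expS {a b : R} {D : R⟦X⟧} (hD : IsDab a b D) (ha : a ≠ 0) :
    (D - C (b - a) * X) * (1 - expS (-(2 * a))) = C (2 * a) * X := by
  obtain ⟨-, hrel⟩ | ⟨h0, -⟩ := hD
  · have h1 : expS a * expS (-a) = 1 := by rw [expS_mul_expS, add_neg_cancel, expS_zero]
    have h2 : expS (-a) * expS (-a) = expS (-(2 * a)) := by rw [expS_mul_expS]; ring_nf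
    rw [map_sub, map_mul, map_ofNat]
    linear_combination expS (-a) * hrel - (D - X * C a - X * C b) * h1
      + (D + X * C a - X * C b) * h2
  · exact absurd h0 ha

theorem IsDab.mul_coeff_pow_succ {a b : R} {D : R⟦X⟧} (hD : IsDab a b D) (ha : a ≠ 0) (n : ℕ) :
    2 * a * coeff n (D ^ (n + 1)) = (b + a) ^ (n + 1) - (b - a) ^ (n + 1) := by
  have h2a : 2 * a ≠ 0 := mul_ne_zero two_ne_zero ha
  have hV := hD.sub_mul_one_sub_expS ha
  have hcoeff (m : ℕ) : coeff m ((D - C (b - a) * X) ^ (m + 1)) = (2 * a) ^ m := by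
    rw [coeff_pow_succ_of_X_mul_derivative (X_mul_derivative_eq_of_mul_one_sub_expS h2a hV),
      constantCoeff_eq_one_of_mul_one_sub_expS h2a hV, mul_one]
  have h := coeff_add_C_mul_X_pow_succ (d := b - a) hcoeff n
  rwa [sub_add_cancel, show 2 * a + (b - a) = b + a by ring] at h

end CharZero

/-- formula (3.1): for `a ≠ 0`, the coefficient of `t^n` in `D_{a,b}^{n+1}`
equals `((b+a)^{n+1} − (b−a)^{n+1})/(2a) = ∑_{k=0}^{n} (b+a)^k (b−a)^{n−k}`. -/
theorem Dab_genus_CPn (a b : ℂ) (ha : a ≠ 0) (D : PowerSeries ℂ) (hD : IsDab a b D)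
    (n : ℕ) :
    PowerSeries.coeff n (D ^ (n + 1))
        = ((b + a) ^ (n + 1) - (b - a) ^ (n + 1)) / (2 * a) ∧
      PowerSeries.coeff n (D ^ (n + 1))
        = ∑ k ∈ Finset.range (n + 1), (b + a) ^ k * (b - a) ^ (n - k) := by
  have h2a : (2 : ℂ) * a ≠ 0 := mul_ne_zero two_ne_zero ha
  have hcoeff : coeff n (D ^ (n + 1)) = ((b + a) ^ (n + 1) - (b - a) ^ (n + 1)) / (2 * a) := by
    rw [eq_div_iff h2a, mul_comm, hD.mul_coeff_pow_succ ha]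
  refine ⟨hcoeff, ?_⟩
  rw [hcoeff, div_eq_iff h2a, ← geom_sum₂_mul, Nat.add_sub_cancel]
  ring

end RigidGenus
end
end
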